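/- arXiv:2301.09979 — 6 statements merged into one kernel-verified Lean document; each statement's English description precedes it below -/
import Mathlib

section
/- Let G be a finite simple isolate-free graph on n vertices with maximum degree Δ(G), and let Ψ be a total coalition partition of G. If A₁,B₁,A₂,B₂,…,A_m,B_m are 2m pairwise distinct classes of Ψ such that A_i and B_i form a total coalition for each i (i.e., these pairs form a matching of size m in the total coalition graph TCG(G,Ψ)), then m ≤ Δ(G). -/
open scoped Classical

variable {V : Type*}

/-- `S` is a total dominating set of `G`: every vertex of `G` has a neighbor in `S`. -/
def TotalDomSet (G : SimpleGraph V) (S : Finset V) : Prop :=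
  ∀ v : V, ∃ u ∈ S, G.Adj v u

/-- Two disjoint sets `A`, `B` form a total coalition in `G` if neither is a total
dominating set but their union is. -/
def TotalCoalition [DecidableEq V] (G : SimpleGraph V) (A B : Finset V) : Prop :=
  Disjoint A B ∧ ¬ TotalDomSet G A ∧ ¬ TotalDomSet G B ∧ TotalDomSet G (A ∪ B)

/-- A graph is isolate-free if every vertex has a neighbor. -/
def IsolateFree (G : SimpleGraph V) : Prop :=
  ∀ v : V, ∃ u : V, G.Adj v u

/-- `Ψ` is a total coalition partition of `G`: a partition of the vertex set into
nonempty classes, none of which is a total dominating set, such that every class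
forms a total coalition with at least one other class. -/
def IsTCPartition [DecidableEq V] (G : SimpleGraph V) (Ψ : Finset (Finset V)) : Prop :=
  (∀ C ∈ Ψ, C.Nonempty) ∧
  (∀ v : V, ∃! C, C ∈ Ψ ∧ v ∈ C) ∧
  (∀ C ∈ Ψ, ¬ TotalDomSet G C) ∧
  (∀ C ∈ Ψ, ∃ D ∈ Ψ, D ≠ C ∧ TotalCoalition G C D)

/-- The total coalition graph `TCG(G,Ψ)`: vertices are the classes of `Ψ`, and two
classes are adjacent iff they form a total coalition. -/
def TCG [DecidableEq V] (G : SimpleGraph V) (Ψ : Finset (Finset V)) :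
    SimpleGraph {C // C ∈ Ψ} where
  Adj C D := C ≠ D ∧ TotalCoalition G (C : Finset V) (D : Finset V)
  symm := by
    constructor
    rintro C D ⟨hne, hd, hA, hB, hU⟩
    exact ⟨hne.symm, hd.symm, hB, hA, by rwa [Finset.union_comm]⟩
  loopless := by constructor; rintro C ⟨hne, _⟩; exact hne rfl

/-!
Fix any vertex `v`. Each union `Aᵢ ∪ Bᵢ` is totally dominating, so `v` has a neighbor in it;
the `2m` classes are distinct classes of a partition, so the `m` unions are pairwise disjoint
and these neighbors are distinct. Hence `m ≤ deg v ≤ Δ(G)`.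
-/

open Function

namespace IsTCPartition

variable [DecidableEq V] {G : SimpleGraph V} {Ψ : Finset (Finset V)}

theorem disjoint_of_ne (hΨ : IsTCPartition G Ψ) {C D : Finset V} (hC : C ∈ Ψ) (hD : D ∈ Ψ)
    (hCD : C ≠ D) : Disjoint C D := by
  refine Finset.disjoint_left.mpr fun v hvC hvD => hCD ?_
  obtain ⟨E, -, hE⟩ := hΨ.2.1 v
  exact (hE C ⟨hC, hvC⟩).trans (hE D ⟨hD, hvD⟩).symm

theorem pairwise_disjoint_union {ι : Type*} (hΨ : IsTCPartition G Ψ) {A B : ι → Finset V}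
    (hA : ∀ i, A i ∈ Ψ) (hB : ∀ i, B i ∈ Ψ) (hinj : Injective (Sum.elim A B)) :
    Pairwise (Disjoint on fun i => A i ∪ B i) := by
  have hmem : ∀ x, Sum.elim A B x ∈ Ψ := Sum.rec hA hB
  have hdisj : ∀ x y, x ≠ y → Disjoint (Sum.elim A B x) (Sum.elim A B y) :=
    fun _ _ hxy => hΨ.disjoint_of_ne (hmem _) (hmem _) (hinj.ne hxy)
  intro i j hij
  rw [onFun, Finset.disjoint_union_left, Finset.disjoint_union_right,
    Finset.disjoint_union_right]
  exact ⟨⟨hdisj (.inl i) (.inl j) (by simpa), hdisj (.inl i) (.inr j) (by simp)⟩,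
    hdisj (.inr i) (.inl j) (by simp), hdisj (.inr i) (.inr j) (by simpa)⟩

end IsTCPartition

theorem card_le_degree_of_pairwise_disjoint_totalDomSet [Fintype V] {ι : Type*} [Fintype ι]
    {G : SimpleGraph V} [DecidableRel G.Adj] {S : ι → Finset V}
    (hdisj : Pairwise (Disjoint on S)) (hdom : ∀ i, TotalDomSet G (S i)) (v : V) :
    Fintype.card ι ≤ G.degree v := by
  choose u hu hadj using fun i => hdom i v
  have hinj : Injective u := fun i j hij =>
    by_contra fun hne => Finset.disjoint_left.mp (hdisj hne) (hu i) (hij ▸ hu j)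
  rw [← G.card_neighborSet_eq_degree]
  exact Fintype.card_le_of_injective (fun i => ⟨u i, hadj i⟩)
    fun i j hij => hinj (congrArg Subtype.val hij)

theorem statement_1_general [Fintype V] [DecidableEq V]
    (G : SimpleGraph V) [DecidableRel G.Adj]
    (Ψ : Finset (Finset V)) (hΨ : IsTCPartition G Ψ)
    (m : ℕ) (A B : Fin m → Finset V)
    (hA : ∀ i, A i ∈ Ψ) (hB : ∀ i, B i ∈ Ψ)
    (hinj : Function.Injective (Sum.elim A B))
    (hcoal : ∀ i, TotalCoalition G (A i) (B i)) :
    m ≤ G.maxDegree := by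
  obtain rfl | hm := Nat.eq_zero_or_pos m
  · exact Nat.zero_le _
  -- A class that is not totally dominating witnesses that `V` is nonempty.
  obtain ⟨v, -⟩ := not_forall.mp (hcoal ⟨0, hm⟩).2.1
  calc m = Fintype.card (Fin m) := (Fintype.card_fin m).symm
    _ ≤ G.degree v := card_le_degree_of_pairwise_disjoint_totalDomSet
          (hΨ.pairwise_disjoint_union hA hB hinj) (fun i => (hcoal i).2.2.2) v
    _ ≤ G.maxDegree := G.degree_le_maxDegree v

/-- If `2m` pairwise distinct classes of a total coalition partition form `m` total
coalition pairs (a matching of size `m` in `TCG(G,Ψ)`), then `m ≤ Δ(G)`. -/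
theorem statement_1 [Fintype V] [DecidableEq V]
    (G : SimpleGraph V) [DecidableRel G.Adj] (hG : IsolateFree G)
    (Ψ : Finset (Finset V)) (hΨ : IsTCPartition G Ψ)
    (m : ℕ) (A B : Fin m → Finset V)
    (hA : ∀ i, A i ∈ Ψ) (hB : ∀ i, B i ∈ Ψ)
    (hinj : Function.Injective (Sum.elim A B))
    (hcoal : ∀ i, TotalCoalition G (A i) (B i)) :
    m ≤ G.maxDegree :=
  statement_1_general G Ψ hΨ m A B hA hB hinj hcoal
end

section
/- Let G be a finite simple isolate-free graph on n vertices with maximum degree Δ = Δ(G), and let Ψ be a total coalition partition of G. If there exist 2Δ pairwise distinct classes A₁,B₁,…,A_Δ,B_Δ of Ψ such that A_i and B_i form a total coalition for each i (i.e., the total coalition graph TCG(G,Ψ) has a matching of size Δ), then Ψ has exactly 2Δ classes, and for each i the union A_i ∪ B_i has cardinality exactly n/Δ. -/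
open scoped Classical

variable {V : Type*}

/-! The unions `A i ∪ B i` are `Δ` pairwise disjoint total dominating sets. Every vertex `u` has
a neighbour in each of them, so `Δ ≤ deg u ≤ Δ`: the graph is `Δ`-regular and each union contains
exactly one neighbour of every vertex. Double counting the edges between `V` and `A i ∪ B i` gives
`|A i ∪ B i| · Δ = n`; hence the `Δ` unions have total size `n`, cover `V`, and leave no room for
further classes of `Ψ`. -/

open Function

namespace Finset

variable {α ι : Type*} [DecidableEq α]

lemma pairwise_disjoint_union_of_sum_elim {f g : ι → Finset α}
    (h : Pairwise (Disjoint on Sum.elim f g)) :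
    Pairwise (Disjoint on fun i => f i ∪ g i) := by
  intro i j hij
  simp only [onFun, disjoint_union_left, disjoint_union_right]
  exact ⟨⟨@h (.inl i) (.inl j) (by simpa), @h (.inr i) (.inl j) Sum.inr_ne_inl⟩,
    @h (.inl i) (.inr j) Sum.inl_ne_inr, @h (.inr i) (.inr j) (by simpa)⟩

lemma exists_mem_of_sum_card_eq_card [Fintype α] [Fintype ι] {U : ι → Finset α}
    (hU : Pairwise (Disjoint on U)) (hcard : ∑ i, #(U i) = Fintype.card α) (a : α) :
    ∃ i, a ∈ U i := by
  have hcover : univ.biUnion U = univ :=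
    eq_univ_of_card _ (by rw [card_biUnion fun i _ j _ hij => hU hij, hcard])
  simpa using (hcover ▸ mem_univ a : a ∈ univ.biUnion U)

end Finset

section Partition

variable {α κ : Type*} {Ψ : Finset (Finset α)}

lemma pairwise_disjoint_of_forall_existsUnique_mem (huniq : ∀ a : α, ∃! C, C ∈ Ψ ∧ a ∈ C)
    {f : κ → Finset α} (hf : Injective f) (hfΨ : ∀ k, f k ∈ Ψ) : Pairwise (Disjoint on f) := by
  intro k l hkl
  refine Finset.disjoint_left.2 fun a hak hal => hkl (hf ?_)
  exact (huniq a).unique ⟨hfΨ k, hak⟩ ⟨hfΨ l, hal⟩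

lemma card_eq_of_forall_existsUnique_mem [Fintype κ] (hne : ∀ C ∈ Ψ, C.Nonempty)
    (huniq : ∀ a : α, ∃! C, C ∈ Ψ ∧ a ∈ C) {f : κ → Finset α} (hf : Injective f)
    (hfΨ : ∀ k, f k ∈ Ψ) (hcover : ∀ a, ∃ k, a ∈ f k) : Ψ.card = Fintype.card κ := by
  suffices Ψ = Finset.univ.image f by
    rw [this, Finset.card_image_of_injective _ hf, Finset.card_univ]
  ext C
  simp only [Finset.mem_image, Finset.mem_univ, true_and]
  refine ⟨fun hC => ?_, fun ⟨k, hk⟩ => hk ▸ hfΨ k⟩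
  obtain ⟨a, ha⟩ := hne C hC
  obtain ⟨k, hk⟩ := hcover a
  exact ⟨k, (huniq a).unique ⟨hfΨ k, hk⟩ ⟨hC, ha⟩⟩

end Partition

lemma TotalDomSet.filter_adj_nonempty {G : SimpleGraph V} [DecidableRel G.Adj] {S : Finset V}
    (hS : TotalDomSet G S) (u : V) : (S.filter (G.Adj u)).Nonempty := by
  obtain ⟨w, hw, huw⟩ := hS u
  exact ⟨w, Finset.mem_filter.2 ⟨hw, huw⟩⟩

lemma card_le_sum_card_filter_adj {G : SimpleGraph V} [DecidableRel G.Adj] {ι : Type*}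
    [Fintype ι] {U : ι → Finset V} (htd : ∀ i, TotalDomSet G (U i)) (u : V) :
    Fintype.card ι ≤ ∑ i, ((U i).filter (G.Adj u)).card := by
  rw [Fintype.card_eq_sum_ones]
  exact Finset.sum_le_sum fun i _ => ((htd i).filter_adj_nonempty u).card_pos

namespace SimpleGraph

variable [Fintype V] (G : SimpleGraph V) [DecidableRel G.Adj]

lemma sum_card_filter_adj_le_degree {ι : Type*} [Fintype ι] {U : ι → Finset V}
    (hU : Pairwise (Disjoint on U)) (u : V) :
    ∑ i, ((U i).filter (G.Adj u)).card ≤ G.degree u := by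
  rw [← Finset.card_biUnion fun i _ j _ hij => (hU hij).mono
    (Finset.filter_subset _ _) (Finset.filter_subset _ _), ← card_neighborFinset_eq_degree]
  refine Finset.card_le_card fun w hw => ?_
  obtain ⟨i, -, hw⟩ := Finset.mem_biUnion.1 hw
  exact (mem_neighborFinset G u w).2 (Finset.mem_filter.1 hw).2

lemma sum_card_filter_adj_eq_sum_degree (S : Finset V) :
    ∑ u, (S.filter (G.Adj u)).card = ∑ w ∈ S, G.degree w := by
  refine (Finset.sum_card_bipartiteAbove_eq_sum_card_bipartiteBelow G.Adj).trans ?_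
  refine Finset.sum_congr rfl fun w _ => ?_
  rw [← card_neighborFinset_eq_degree, neighborFinset_eq_filter]
  simp only [Finset.bipartiteBelow, G.adj_comm]

lemma IsRegularOfDegree.card_mul_eq_card {d : ℕ} (hG : G.IsRegularOfDegree d) {S : Finset V}
    (hS : ∀ u, (S.filter (G.Adj u)).card = 1) : S.card * d = Fintype.card V := by
  have := G.sum_card_filter_adj_eq_sum_degree S
  simp only [hS, hG.degree_eq, Finset.sum_const, smul_eq_mul, mul_one, Finset.card_univ] at this
  exact this.symm

section DisjointTotalDomSets

variable {G} {ι : Type*} [Fintype ι] {U : ι → Finset V}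

lemma isRegularOfDegree_maxDegree_of_disjoint_totalDomSet (hU : Pairwise (Disjoint on U))
    (htd : ∀ i, TotalDomSet G (U i)) (hι : Fintype.card ι = G.maxDegree) :
    G.IsRegularOfDegree G.maxDegree := fun u =>
  (G.degree_le_maxDegree u).antisymm <| hι.ge.trans <|
    (card_le_sum_card_filter_adj htd u).trans (G.sum_card_filter_adj_le_degree hU u)

lemma card_filter_adj_eq_one_of_disjoint_totalDomSet (hU : Pairwise (Disjoint on U))
    (htd : ∀ i, TotalDomSet G (U i)) (hι : Fintype.card ι = G.maxDegree) (u : V) (i : ι) :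
    ((U i).filter (G.Adj u)).card = 1 := by
  have hpos : ∀ j ∈ Finset.univ, 1 ≤ ((U j).filter (G.Adj u)).card :=
    fun j _ => ((htd j).filter_adj_nonempty u).card_pos
  have hsum : ∑ j : ι, 1 = ∑ j, ((U j).filter (G.Adj u)).card := by
    refine le_antisymm (Finset.sum_le_sum hpos) ?_
    calc ∑ j, ((U j).filter (G.Adj u)).card ≤ G.degree u := G.sum_card_filter_adj_le_degree hU u
      _ ≤ G.maxDegree := G.degree_le_maxDegree u
      _ = ∑ j : ι, 1 := by rw [← hι, Fintype.card_eq_sum_ones]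
  exact ((Finset.sum_eq_sum_iff_of_le hpos).1 hsum i (Finset.mem_univ i)).symm

lemma card_mul_maxDegree_eq_card_of_disjoint_totalDomSet (hU : Pairwise (Disjoint on U))
    (htd : ∀ i, TotalDomSet G (U i)) (hι : Fintype.card ι = G.maxDegree) (i : ι) :
    (U i).card * G.maxDegree = Fintype.card V :=
  (isRegularOfDegree_maxDegree_of_disjoint_totalDomSet hU htd hι).card_mul_eq_card G
    fun u => card_filter_adj_eq_one_of_disjoint_totalDomSet hU htd hι u i

lemma exists_mem_of_disjoint_totalDomSet (hG : IsolateFree G) (hU : Pairwise (Disjoint on U))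
    (htd : ∀ i, TotalDomSet G (U i)) (hι : Fintype.card ι = G.maxDegree) (v : V) :
    ∃ i, v ∈ U i := by
  refine Finset.exists_mem_of_sum_card_eq_card hU ?_ v
  have hΔ : 0 < G.maxDegree :=
    ((G.degree_pos_iff_exists_adj v).2 (hG v)).trans_le (G.degree_le_maxDegree v)
  refine Nat.eq_of_mul_eq_mul_right hΔ ?_
  rw [Finset.sum_mul, Finset.sum_congr rfl fun i _ =>
    card_mul_maxDegree_eq_card_of_disjoint_totalDomSet hU htd hι i]
  simp [hι, mul_comm]

end DisjointTotalDomSets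

end SimpleGraph

/-- If a total coalition partition admits a matching of size `Δ(G)` in its total
coalition graph, then it has exactly `2Δ(G)` classes and every matched pair of
classes has union of cardinality exactly `n / Δ(G)`. -/
theorem statement_3 [Fintype V] [DecidableEq V]
    (G : SimpleGraph V) [DecidableRel G.Adj] (hG : IsolateFree G)
    (Ψ : Finset (Finset V)) (hΨ : IsTCPartition G Ψ)
    (A B : Fin G.maxDegree → Finset V)
    (hA : ∀ i, A i ∈ Ψ) (hB : ∀ i, B i ∈ Ψ)
    (hinj : Function.Injective (Sum.elim A B))
    (hcoal : ∀ i, TotalCoalition G (A i) (B i)) :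
    Ψ.card = 2 * G.maxDegree ∧
    ∀ i, (A i ∪ B i).card * G.maxDegree = Fintype.card V := by
  obtain ⟨hne, huniq, -, -⟩ := hΨ
  have hclasses : ∀ k, Sum.elim A B k ∈ Ψ := Sum.forall.2 ⟨hA, hB⟩
  have hU : Pairwise (Disjoint on fun i => A i ∪ B i) :=
    Finset.pairwise_disjoint_union_of_sum_elim
      (pairwise_disjoint_of_forall_existsUnique_mem huniq hinj hclasses)
  have htd : ∀ i, TotalDomSet G (A i ∪ B i) := fun i => (hcoal i).2.2.2
  have hcover : ∀ v, ∃ k, v ∈ Sum.elim A B k := fun v => by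
    obtain ⟨i, hi⟩ :=
      SimpleGraph.exists_mem_of_disjoint_totalDomSet hG hU htd (Fintype.card_fin _) v
    rcases Finset.mem_union.1 hi with h | h
    exacts [⟨.inl i, h⟩, ⟨.inr i, h⟩]
  refine ⟨?_,
    SimpleGraph.card_mul_maxDegree_eq_card_of_disjoint_totalDomSet hU htd (Fintype.card_fin _)⟩
  rw [card_eq_of_forall_existsUnique_mem hne huniq hinj hclasses hcover]
  simp [two_mul]
end

section
/- Let G be a finite simple isolate-free graph with maximum degree Δ = Δ(G), and let Ψ be a total coalition partition of G. If some class C of Ψ forms a total coalition with exactly Δ other classes (i.e., C has degree Δ in the total coalition graph TCG(G,Ψ)), then the set of these Δ classes is a vertex cover of TCG(G,Ψ): every pair of classes of Ψ forming a total coalition contains at least one of these Δ classes. -/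
open scoped Classical

variable {V : Type*}

/-
A class `C` that is not a total dominating set misses some vertex `v`: no neighbor of `v` lies
in `C`. Each of the `Δ` coalition partners `X` of `C` must then supply a neighbor of `v`, and
since the partners are disjoint while `v` has at most `Δ` neighbors, the partners cover the whole
neighborhood of `v`. Any total coalition `D ∪ E` also dominates `v`, so `D` or `E` contains a
neighbor of `v`, hence meets, and therefore equals, one of the partners.
-/

open Finset

theorem Finset.subset_biUnion_of_card_le {α ι : Type*} [DecidableEq α] {s : Finset α}
    {P : Finset ι} {f : ι → Finset α} (hdisj : (P : Set ι).PairwiseDisjoint f)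
    (hmeet : ∀ i ∈ P, (s ∩ f i).Nonempty) (hcard : #s ≤ #P) : s ⊆ P.biUnion f := by
  have hsub : P.biUnion (fun i => s ∩ f i) ⊆ s :=
    biUnion_subset.2 fun _ _ => inter_subset_left
  have hle : #P ≤ #(P.biUnion fun i => s ∩ f i) :=
    card_le_card_biUnion (hdisj.mono fun _ => inter_subset_right) hmeet
  calc s = P.biUnion (fun i => s ∩ f i) := (eq_of_subset_of_card_le hsub (hcard.trans hle)).symm
    _ ⊆ P.biUnion f := biUnion_mono fun _ _ => inter_subset_right

section

variable [DecidableEq V] {G : SimpleGraph V}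

theorem TotalDomSet.exists_adj_mem_right {A B : Finset V} {v : V}
    (h : TotalDomSet G (A ∪ B)) (hA : ∀ u ∈ A, ¬ G.Adj v u) : ∃ u ∈ B, G.Adj v u := by
  obtain ⟨u, hu, hadj⟩ := h v
  exact ⟨u, (mem_union.1 hu).resolve_left fun huA => hA u huA hadj, hadj⟩

namespace IsTCPartition

variable {Ψ : Finset (Finset V)}

theorem eq_of_mem_of_mem (hΨ : IsTCPartition G Ψ) {X Y : Finset V} {u : V}
    (hX : X ∈ Ψ) (hY : Y ∈ Ψ) (huX : u ∈ X) (huY : u ∈ Y) : X = Y :=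
  (hΨ.2.1 u).unique ⟨hX, huX⟩ ⟨hY, huY⟩

theorem pairwiseDisjoint (hΨ : IsTCPartition G Ψ) : (Ψ : Set (Finset V)).PairwiseDisjoint id :=
  fun _ hX _ hY hXY => disjoint_left.2 fun _ huX huY => hXY (hΨ.eq_of_mem_of_mem hX hY huX huY)

end IsTCPartition

end

theorem statement_4_general [Fintype V] [DecidableEq V]
    (G : SimpleGraph V) [DecidableRel G.Adj]
    (Ψ : Finset (Finset V)) (hΨ : IsTCPartition G Ψ)
    (C : Finset V) (hC : C ∈ Ψ)
    (hdeg : (Ψ.filter fun D => D ≠ C ∧ TotalCoalition G C D).card = G.maxDegree) :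
    ∀ D ∈ Ψ, ∀ E ∈ Ψ, D ≠ E → TotalCoalition G D E →
      D ∈ Ψ.filter (fun X => X ≠ C ∧ TotalCoalition G C X) ∨
      E ∈ Ψ.filter (fun X => X ≠ C ∧ TotalCoalition G C X) := by
  intro D hD E hE _ hDE
  set P := Ψ.filter fun X => X ≠ C ∧ TotalCoalition G C X
  have hCnotDom : ¬ TotalDomSet G C := hΨ.2.2.1 C hC
  obtain ⟨v, hv⟩ : ∃ v, ∀ u ∈ C, ¬ G.Adj v u := by simpa [TotalDomSet] using hCnotDom
  have hcover : G.neighborFinset v ⊆ P.biUnion id := by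
    refine subset_biUnion_of_card_le (hΨ.pairwiseDisjoint.subset (filter_subset _ _)) ?_ ?_
    · intro X hX
      obtain ⟨-, -, -, -, -, hCXdom⟩ := mem_filter.1 hX
      obtain ⟨u, huX, hadj⟩ := hCXdom.exists_adj_mem_right hv
      exact ⟨u, mem_inter.2 ⟨(G.mem_neighborFinset v u).2 hadj, huX⟩⟩
    · rw [G.card_neighborFinset_eq_degree, hdeg]
      exact G.degree_le_maxDegree v
  obtain ⟨u, hu, hadj⟩ := hDE.2.2.2 v
  obtain ⟨X, hXP, huX⟩ := mem_biUnion.1 (hcover ((G.mem_neighborFinset v u).2 hadj))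
  have hXΨ : X ∈ Ψ := (mem_filter.1 hXP).1
  rcases mem_union.1 hu with huD | huE
  · exact .inl (hΨ.eq_of_mem_of_mem hD hXΨ huD huX ▸ hXP)
  · exact .inr (hΨ.eq_of_mem_of_mem hE hXΨ huE huX ▸ hXP)

/-- If a class `C` of a total coalition partition forms a total coalition with exactly
`Δ(G)` other classes, then these `Δ(G)` classes form a vertex cover of `TCG(G,Ψ)`:
every total coalition pair of classes contains at least one of them. -/
theorem statement_4 [Fintype V] [DecidableEq V]
    (G : SimpleGraph V) [DecidableRel G.Adj] (hG : IsolateFree G)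
    (Ψ : Finset (Finset V)) (hΨ : IsTCPartition G Ψ)
    (C : Finset V) (hC : C ∈ Ψ)
    (hdeg : (Ψ.filter fun D => D ≠ C ∧ TotalCoalition G C D).card = G.maxDegree) :
    ∀ D ∈ Ψ, ∀ E ∈ Ψ, D ≠ E → TotalCoalition G D E →
      D ∈ Ψ.filter (fun X => X ≠ C ∧ TotalCoalition G C X) ∨
      E ∈ Ψ.filter (fun X => X ≠ C ∧ TotalCoalition G C X) :=
  statement_4_general G Ψ hΨ C hC hdeg
end

section
/- For every finite simple isolate-free graph G there exists a finite simple graph H together with a total coalition partition π of H and a bijection φ from the vertex set of G to the classes of π such that two vertices u,v of G are adjacent in G if and only if the classes φ(u) and φ(v) form a total coalition in H. In other words, every isolate-free graph G is isomorphic to the total coalition graph TCG(H,π) for some graph H and total coalition partition π of H. -/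
open scoped Classical

variable {V : Type*}

/-! Vertex `v` of `G` becomes the class `{v} × Option V` of `H`: a base vertex `(v, none)` and
testers `(v, some w)`. The tester `(v, some w)` is adjacent to the base vertex `(y, none)` iff
`y ∉ {v, w}`, or `y = w` and `vw ∈ E(G)`. No class dominates its own base vertex, and the union of
the classes of `u ≠ v` dominates the tester `(u, some v)` iff `uv ∈ E(G)`; when it does, it
dominates everything. So the classes form a total coalition partition of `H` whose total coalition
graph is `G`. -/

section Transport

variable {W X : Type*} {H : SimpleGraph W} {H' : SimpleGraph X}

lemma totalDomSet_map_iff (e : H ≃g H') (S : Finset W) :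
    TotalDomSet H' (S.map e.toEquiv.toEmbedding) ↔ TotalDomSet H S := by
  rw [TotalDomSet, TotalDomSet, e.surjective.forall]
  refine forall_congr' fun w => ?_
  simp only [Finset.mem_map, Equiv.coe_toEmbedding, exists_exists_and_eq_and]
  exact exists_congr fun _ => and_congr_right fun _ => e.map_adj_iff

variable [DecidableEq W] [DecidableEq X]

lemma totalCoalition_map_iff (e : H ≃g H') (A B : Finset W) :
    TotalCoalition H' (A.map e.toEquiv.toEmbedding) (B.map e.toEquiv.toEmbedding) ↔
      TotalCoalition H A B := by
  rw [TotalCoalition, TotalCoalition, ← Finset.map_union, totalDomSet_map_iff,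
    totalDomSet_map_iff, totalDomSet_map_iff, Finset.disjoint_map]

lemma IsTCPartition.map {π : Finset (Finset W)} (e : H ≃g H') (h : IsTCPartition H π) :
    IsTCPartition H' (π.map e.toEquiv.finsetCongr.toEmbedding) := by
  obtain ⟨hne, hcover, hnot, hcoal⟩ := h
  simp only [IsTCPartition, Finset.forall_mem_map, Equiv.coe_toEmbedding,
    Equiv.finsetCongr_apply]
  refine ⟨fun C hC => (hne C hC).map, e.surjective.forall.2 fun w => ?_,
    fun C hC => (totalDomSet_map_iff e C).not.2 (hnot C hC), fun C hC => ?_⟩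
  · refine (e.toEquiv.finsetCongr.existsUnique_congr fun C => ?_).1 (hcover w)
    simp [Equiv.finsetCongr_apply, -Finset.mem_map_equiv]
  · obtain ⟨D, hD, hDC, hCD⟩ := hcoal C hC
    exact ⟨_, Finset.mem_map_of_mem _ hD, (Finset.map_injective _).ne hDC,
      (totalCoalition_map_iff e C D).2 hCD⟩

def tcgCongr (e : H ≃g H') (π : Finset (Finset W)) :
    TCG H π ≃g TCG H' (π.map e.toEquiv.finsetCongr.toEmbedding) where
  toEquiv := e.toEquiv.finsetCongr.subtypeEquiv fun C => (Finset.mem_map' _).symm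
  map_rel_iff' {C D} := by
    simp only [TCG, Equiv.subtypeEquiv_apply, ne_eq, Equiv.finsetCongr_apply, Finset.map_inj,
      totalCoalition_map_iff, Subtype.ext_iff]

end Transport

section Fibers

variable {α β : Type*} [Fintype α] [DecidableEq β] {f : α → β}

def fiber (f : α → β) (b : β) : Finset α := Finset.univ.filter (f · = b)

@[simp] lemma mem_fiber {a : α} {b : β} : a ∈ fiber f b ↔ f a = b := by simp [fiber]

lemma disjoint_fiber {b b' : β} (h : b ≠ b') : Disjoint (fiber f b) (fiber f b') :=
  Finset.disjoint_filter.2 fun _ _ hb hb' => h (hb ▸ hb')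

lemma fiber_injective (hf : Function.Surjective f) : Function.Injective (fiber f) := by
  intro b b' h
  obtain ⟨a, rfl⟩ := hf b
  have ha : a ∈ fiber f (f a) := mem_fiber.2 rfl
  rwa [h, mem_fiber] at ha

variable [DecidableEq α] {G : SimpleGraph β} {H : SimpleGraph α}

lemma totalCoalition_fiber_iff (hfib : ∀ b, ¬ TotalDomSet H (fiber f b))
    (hunion : ∀ u v, u ≠ v → (TotalDomSet H (fiber f u ∪ fiber f v) ↔ G.Adj u v))
    {u v : β} (huv : u ≠ v) :
    TotalCoalition H (fiber f u) (fiber f v) ↔ G.Adj u v := by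
  simp only [TotalCoalition, hunion u v huv, disjoint_fiber huv, hfib, not_false_eq_true,
    true_and]

variable [Fintype β]

def fibers (f : α → β) : Finset (Finset α) := Finset.univ.image (fiber f)

lemma isTCPartition_fibers (hf : Function.Surjective f) (hG : IsolateFree G)
    (hfib : ∀ b, ¬ TotalDomSet H (fiber f b))
    (hunion : ∀ u v, u ≠ v → (TotalDomSet H (fiber f u ∪ fiber f v) ↔ G.Adj u v)) :
    IsTCPartition H (fibers f) := by
  have mem_fibers (b : β) : fiber f b ∈ fibers f := Finset.mem_image_of_mem _ (Finset.mem_univ b)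
  simp only [IsTCPartition, fibers, Finset.forall_mem_image, Finset.mem_univ, true_implies]
  refine ⟨fun b => ?_, fun a => ⟨fiber f (f a), ⟨mem_fibers _, mem_fiber.2 rfl⟩, ?_⟩, hfib,
    fun u => ?_⟩
  · obtain ⟨a, rfl⟩ := hf b
    exact ⟨a, mem_fiber.2 rfl⟩
  · rintro _ ⟨hC, ha⟩
    obtain ⟨b, -, rfl⟩ := Finset.mem_image.1 hC
    rw [mem_fiber.1 ha]
  · obtain ⟨v, huv⟩ := hG u
    exact ⟨fiber f v, mem_fibers v, (fiber_injective hf).ne (G.ne_of_adj huv).symm,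
      (totalCoalition_fiber_iff hfib hunion (G.ne_of_adj huv)).2 huv⟩

noncomputable def fibersIso (hf : Function.Surjective f)
    (hfib : ∀ b, ¬ TotalDomSet H (fiber f b))
    (hunion : ∀ u v, u ≠ v → (TotalDomSet H (fiber f u ∪ fiber f v) ↔ G.Adj u v)) :
    G ≃g TCG H (fibers f) where
  toEquiv := Equiv.ofBijective (fun b => ⟨fiber f b, Finset.mem_image_of_mem _ (Finset.mem_univ b)⟩)
    ⟨fun _ _ h => fiber_injective hf (congrArg Subtype.val h), by
      rintro ⟨C, hC⟩
      obtain ⟨b, -, rfl⟩ := Finset.mem_image.1 hC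
      exact ⟨b, rfl⟩⟩
  map_rel_iff' {u v} := by
    change (_ ≠ _ ∧ TotalCoalition H (fiber f u) (fiber f v)) ↔ _
    rcases eq_or_ne u v with rfl | huv
    · simp
    · rw [totalCoalition_fiber_iff hfib hunion huv]
      exact and_iff_right ((Equiv.injective _).ne huv)

end Fibers

section Construction

def tcgHost (G : SimpleGraph V) : SimpleGraph (V × Option V) where
  Adj
    | (y, none), (v, some w) | (v, some w), (y, none) => y ≠ v ∧ (G.Adj v w ∨ y ≠ w)
    | _, _ => False
  symm := ⟨by rintro ⟨_, _ | _⟩ ⟨_, _ | _⟩ h <;> exact h⟩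
  loopless := ⟨by rintro ⟨_, _ | _⟩ h <;> simp_all⟩

variable (G : SimpleGraph V)

lemma tcgHost_adj_none_some {y v w : V} :
    (tcgHost G).Adj (y, none) (v, some w) ↔ y ≠ v ∧ (G.Adj v w ∨ y ≠ w) := Iff.rfl

lemma tcgHost_adj_some_none {y v w : V} :
    (tcgHost G).Adj (v, some w) (y, none) ↔ y ≠ v ∧ (G.Adj v w ∨ y ≠ w) := Iff.rfl

variable [Fintype V] [DecidableEq V]

lemma not_totalDomSet_tcgHost_fiber (v : V) : ¬ TotalDomSet (tcgHost G) (fiber Prod.fst v) := by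
  intro h
  obtain ⟨⟨x, _ | w⟩, hx, hadj⟩ := h (v, none)
  · exact hadj
  · exact ((tcgHost_adj_none_some G).1 hadj).1 (mem_fiber.1 hx).symm

lemma totalDomSet_tcgHost_fiber_union_iff {u v : V} (huv : u ≠ v) :
    TotalDomSet (tcgHost G) (fiber Prod.fst u ∪ fiber Prod.fst v) ↔ G.Adj u v := by
  constructor
  · intro h
    obtain ⟨⟨y, _ | w⟩, hy, hadj⟩ := h (u, some v)
    · simp only [Finset.mem_union, mem_fiber] at hy
      obtain ⟨hyu, hadj | hyv⟩ := (tcgHost_adj_some_none G).1 hadj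
      · exact hadj
      · exact absurd (hy.resolve_left hyu) hyv
    · exact hadj.elim
  · rintro hadj ⟨x, _ | w⟩
    · rcases eq_or_ne x u with rfl | hxu
      · exact ⟨(v, some x), by simp, (tcgHost_adj_none_some G).2 ⟨huv, .inl hadj.symm⟩⟩
      · exact ⟨(u, some v), by simp, (tcgHost_adj_none_some G).2 ⟨hxu, .inl hadj⟩⟩
    · -- neither `(u, none)` nor `(v, none)` dominates `(x, some w)` only if `{x, w} = {u, v}`
      -- with `x` and `w` nonadjacent
      by_contra hnone
      have hu := fun h => hnone ⟨(u, none), by simp, h⟩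
      have hv := fun h => hnone ⟨(v, none), by simp, h⟩
      rw [tcgHost_adj_some_none] at hu hv
      grind [G.adj_comm]

end Construction

theorem statement_5_general [Fintype V] (G : SimpleGraph V)
    (hG : IsolateFree G) :
    ∃ (n : ℕ) (H : SimpleGraph (Fin n)) (π : Finset (Finset (Fin n))),
      IsTCPartition H π ∧ Nonempty (G ≃g TCG H π) := by
  have hfib := not_totalDomSet_tcgHost_fiber G
  have hunion (u v : V) (huv : u ≠ v) := totalDomSet_tcgHost_fiber_union_iff G huv
  let e := Fintype.equivFin (V × Option V)
  refine ⟨_, (tcgHost G).map e.toEmbedding, (fibers Prod.fst).map e.finsetCongr.toEmbedding, ?_, ?_⟩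
  · exact (isTCPartition_fibers Prod.fst_surjective hG hfib hunion).map (.map e _)
  · exact ⟨(fibersIso Prod.fst_surjective hfib hunion).trans (tcgCongr (.map e _) _)⟩

/-- Every finite isolate-free graph `G` is isomorphic to the total coalition graph
`TCG(H,π)` for some finite graph `H` and total coalition partition `π` of `H`. -/
theorem statement_5 [Fintype V] [DecidableEq V] (G : SimpleGraph V)
    (hG : IsolateFree G) :
    ∃ (n : ℕ) (H : SimpleGraph (Fin n)) (π : Finset (Finset (Fin n))),
      IsTCPartition H π ∧ Nonempty (G ≃g TCG H π) :=
  statement_5_general G hG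
end

section
/- Let G be a finite simple isolate-free graph with minimum degree δ = δ(G) and maximum degree Δ = Δ(G). If δ < ⌊(Δ+2)/2⌋, then every total coalition partition of G has at most δ(Δ − δ + 2) classes; i.e., TC(G) ≤ δ(G)(Δ(G) − δ(G) + 2). -/
open scoped Classical

variable {V : Type*}

/-!
Fix a vertex `v`. The classes meeting `N(v)` are disjoint, so there are at most `deg v` of them.
Every other class `C` has a partner `f C` with `C ∪ f C` totally dominating; since `C` misses
`N(v)`, the partner meets `N(v)`. Each partner leaves some vertex undominated; take a minimum set
`A` of vertices such that every partner leaves some vertex of `A` undominated, so that each `b ∈ A`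
has a private partner. For `a ∈ A`, the classes whose partner leaves `a` undominated meet `N(a)`,
and so do the private partners of the other `#A - 1` vertices of `A`; hence each `a ∈ A` accounts
for at most `Δ + 1 - #A` classes. With `r = #A ≤ deg v` this gives `#Ψ ≤ deg v + r (Δ + 1 - r)`,
and for `v` of minimum degree `δ ≤ Δ / 2` the right side is largest at `r = δ`.
-/

open Finset

theorem Finset.card_le_card_of_forall_not_disjoint {α : Type*} [DecidableEq α]
    {Φ : Finset (Finset α)} (hΦ : (Φ : Set (Finset α)).PairwiseDisjoint id) {N : Finset α}
    (h : ∀ C ∈ Φ, ¬ Disjoint C N) : #Φ ≤ #N :=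
  calc #Φ ≤ #(Φ.biUnion (· ∩ N)) :=
        card_le_card_biUnion (hΦ.mono_on fun _ _ => inter_subset_left)
          fun C hC => not_disjoint_iff_nonempty_inter.mp (h C hC)
    _ ≤ #N := card_le_card (biUnion_subset.mpr fun _ _ => inter_subset_right)

theorem exists_irredundant_cover {α β : Type*} [DecidableEq α] (M : Finset β)
    (P : α → β → Prop) (hP : ∀ X ∈ M, ∃ a, P a X) :
    ∃ A : Finset α, #A ≤ #M ∧ (∀ X ∈ M, ∃ a ∈ A, P a X) ∧
      ∀ b ∈ A, ∃ X ∈ M, P b X ∧ ∀ c ∈ A, c ≠ b → ¬ P c X := by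
  choose z hz using hP
  set T := M.attach.image fun X : {X // X ∈ M} => z X.1 X.2
  obtain ⟨A, ⟨hAT, hAcov⟩, hmin⟩ := (measure card).wf.has_min
    {A | A ⊆ T ∧ ∀ X ∈ M, ∃ a ∈ A, P a X}
    ⟨T, subset_rfl, fun X hX => ⟨z X hX, mem_image.mpr ⟨⟨X, hX⟩, mem_attach _ _, rfl⟩, hz X hX⟩⟩
  refine ⟨A, (card_le_card hAT).trans (card_image_le.trans card_attach.le), hAcov,
    fun b hb => ?_⟩
  by_contra! hredundant
  refine hmin (A.erase b) ⟨(erase_subset b A).trans hAT, fun X hX => ?_⟩ (card_erase_lt_of_mem hb)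
  obtain ⟨c, hc, hcX⟩ := hAcov X hX
  by_cases hcb : c = b
  · subst hcb
    obtain ⟨d, hd, hdc, hdX⟩ := hredundant X hX hcX
    exact ⟨d, mem_erase.mpr ⟨hdc, hd⟩, hdX⟩
  · exact ⟨c, mem_erase.mpr ⟨hcb, hc⟩, hcX⟩

theorem card_le_card_filter_not_add_one {α β : Type*} [DecidableEq α] {A : Finset α}
    {M : Finset β} {P : α → β → Prop} [∀ a X, Decidable (P a X)]
    (hprivate : ∀ b ∈ A, ∃ X ∈ M, P b X ∧ ∀ c ∈ A, c ≠ b → ¬ P c X) {a : α} (ha : a ∈ A) :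
    #A ≤ #{X ∈ M | ¬ P a X} + 1 := by
  have : Nonempty β := ⟨(hprivate a ha).choose⟩
  choose! priv hprivM hprivP hprivOnly using hprivate
  have herase : #(A.erase a) ≤ #{X ∈ M | ¬ P a X} := by
    refine card_le_card_of_injOn priv (fun b hb => ?_) fun b hb c hc hbc => ?_
    · obtain ⟨hba, hbA⟩ := mem_erase.mp hb
      exact mem_filter.mpr ⟨hprivM b hbA, hprivOnly b hbA a ha (Ne.symm hba)⟩
    · by_contra hne
      have hbA := (mem_erase.mp hb).2
      exact hprivOnly c (mem_erase.mp hc).2 b hbA hne (hbc ▸ hprivP b hbA)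
  rw [card_erase_of_mem ha] at herase
  have := card_pos.mpr ⟨a, ha⟩
  omega

section Graph

variable {G : SimpleGraph V}

theorem IsTCPartition.pairwiseDisjoint_s12 [DecidableEq V] {Ψ : Finset (Finset V)}
    (hΨ : IsTCPartition G Ψ) : (Ψ : Set (Finset V)).PairwiseDisjoint id := by
  intro C hC D hD hCD
  refine disjoint_left.mpr fun x hxC hxD => hCD ?_
  obtain ⟨E, -, hE⟩ := hΨ.2.1 x
  exact (hE C ⟨hC, hxC⟩).trans (hE D ⟨hD, hxD⟩).symm

variable [Fintype V] [DecidableRel G.Adj]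

theorem totalDomSet_iff_forall_not_disjoint {S : Finset V} :
    TotalDomSet G S ↔ ∀ v, ¬ Disjoint S (G.neighborFinset v) := by
  simp only [TotalDomSet, not_disjoint_iff, SimpleGraph.mem_neighborFinset]

variable [DecidableEq V]

theorem TotalDomSet.not_disjoint_left_of_disjoint_right {C D : Finset V}
    (h : TotalDomSet G (C ∪ D)) {v : V} (hD : Disjoint D (G.neighborFinset v)) :
    ¬ Disjoint C (G.neighborFinset v) := fun hC =>
  totalDomSet_iff_forall_not_disjoint.mp h v (disjoint_union_left.mpr ⟨hC, hD⟩)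

theorem card_filter_add_card_filter_le_degree {Ψ F K : Finset (Finset V)}
    (hΨ : (Ψ : Set (Finset V)).PairwiseDisjoint id) (hF : F ⊆ Ψ) (hK : K ⊆ Ψ)
    (hFK : Disjoint F K) {f : Finset V → Finset V} (hf : ∀ C ∈ F, TotalDomSet G (C ∪ f C))
    (a : V) :
    #{C ∈ F | Disjoint (f C) (G.neighborFinset a)} + #{X ∈ K | ¬ Disjoint X (G.neighborFinset a)}
      ≤ G.degree a := by
  rw [← card_union_of_disjoint (hFK.mono (filter_subset _ _) (filter_subset _ _)),
    ← G.card_neighborFinset_eq_degree]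
  refine card_le_card_of_forall_not_disjoint
    (hΨ.subset (coe_subset.mpr (union_subset ((filter_subset _ _).trans hF)
      ((filter_subset _ _).trans hK)))) fun C hC => ?_
  rcases mem_union.mp hC with hC | hC
  · obtain ⟨hCF, hfC⟩ := mem_filter.mp hC
    exact (hf C hCF).not_disjoint_left_of_disjoint_right hfC
  · exact (mem_filter.mp hC).2

namespace IsTCPartition

variable {Ψ : Finset (Finset V)}

theorem exists_card_le_mul_sub (hΨ : IsTCPartition G Ψ) {F : Finset (Finset V)} (hF : F ⊆ Ψ)
    {f : Finset V → Finset V} (hfΨ : ∀ C ∈ F, f C ∈ Ψ) (hfdom : ∀ C ∈ F, TotalDomSet G (C ∪ f C))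
    (hFf : Disjoint F (F.image f)) :
    ∃ r ≤ #(F.image f), #F ≤ r * (G.maxDegree + 1 - r) := by
  have hKΨ : F.image f ⊆ Ψ := image_subset_iff.mpr hfΨ
  obtain ⟨A, hAK, hAcov, hAprivate⟩ :=
    exists_irredundant_cover (F.image f) (fun a X => Disjoint X (G.neighborFinset a))
      fun X hX => not_forall_not.mp <| mt totalDomSet_iff_forall_not_disjoint.mpr <|
        hΨ.2.2.1 X (hKΨ hX)
  have hFa : ∀ a ∈ A, #{C ∈ F | Disjoint (f C) (G.neighborFinset a)} ≤ G.maxDegree + 1 - #A := by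
    intro a ha
    have hmiss := card_le_card_filter_not_add_one hAprivate ha
    have hdeg := card_filter_add_card_filter_le_degree hΨ.pairwiseDisjoint_s12 hF hKΨ hFf hfdom a
    have := G.degree_le_maxDegree a
    omega
  have hFcover : F ⊆ A.biUnion fun a => {C ∈ F | Disjoint (f C) (G.neighborFinset a)} := by
    intro C hC
    obtain ⟨a, ha, haC⟩ := hAcov (f C) (mem_image_of_mem f hC)
    rw [mem_biUnion]
    exact ⟨a, ha, mem_filter.mpr ⟨hC, haC⟩⟩
  refine ⟨#A, hAK, ?_⟩
  calc #F ≤ ∑ a ∈ A, #{C ∈ F | Disjoint (f C) (G.neighborFinset a)} :=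
        (card_le_card hFcover).trans card_biUnion_le
    _ ≤ ∑ _a ∈ A, (G.maxDegree + 1 - #A) := sum_le_sum hFa
    _ = #A * (G.maxDegree + 1 - #A) := by rw [sum_const, smul_eq_mul]

theorem exists_card_le_degree_add (hΨ : IsTCPartition G Ψ) (v : V) :
    ∃ r ≤ G.degree v, #Ψ ≤ G.degree v + r * (G.maxDegree + 1 - r) := by
  set F := {C ∈ Ψ | Disjoint C (G.neighborFinset v)}
  set M := {C ∈ Ψ | ¬ Disjoint C (G.neighborFinset v)}
  have hM : #M ≤ G.degree v := G.card_neighborFinset_eq_degree v ▸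
    card_le_card_of_forall_not_disjoint (hΨ.pairwiseDisjoint_s12.subset (filter_subset _ _))
      fun C hC => (mem_filter.mp hC).2
  have hpartner : ∀ C ∈ Ψ, ∃ D ∈ Ψ, TotalDomSet G (C ∪ D) := fun C hC =>
    (hΨ.2.2.2 C hC).imp fun _ ⟨hD, _, hCD⟩ => ⟨hD, hCD.2.2.2⟩
  choose! f hfΨ hfdom using hpartner
  have hfM : F.image f ⊆ M := by
    intro X hX
    obtain ⟨C, hC, rfl⟩ := mem_image.mp hX
    obtain ⟨hCΨ, hCv⟩ := mem_filter.mp hC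
    have hCf := hfdom C hCΨ
    rw [union_comm] at hCf
    exact mem_filter.mpr ⟨hfΨ C hCΨ, hCf.not_disjoint_left_of_disjoint_right hCv⟩
  obtain ⟨r, hr, hF⟩ := hΨ.exists_card_le_mul_sub (F := F) (filter_subset _ _)
    (fun C hC => hfΨ C (filter_subset _ _ hC)) (fun C hC => hfdom C (filter_subset _ _ hC))
    ((disjoint_filter_filter_not Ψ Ψ _).mono_right hfM)
  have hsplit : #F + #M = #Ψ := card_filter_add_card_filter_not _
  exact ⟨r, hr.trans ((card_le_card hfM).trans hM), by omega⟩

end IsTCPartition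

end Graph

theorem add_mul_sub_le_mul_sub_add_two {r d D : ℕ} (hr : r ≤ d) (hd : 2 * d ≤ D) :
    d + r * (D + 1 - r) ≤ d * (D - d + 2) := by
  obtain ⟨k, rfl⟩ := Nat.exists_eq_add_of_le hr
  obtain ⟨s, rfl⟩ := Nat.exists_eq_add_of_le hd
  have e1 : 2 * (r + k) + s + 1 - r = r + 2 * k + s + 1 := by omega
  have e2 : 2 * (r + k) + s - (r + k) + 2 = r + k + s + 2 := by omega
  rw [e1, e2]
  nlinarith

theorem statement_12_general [Fintype V] [DecidableEq V]
    (G : SimpleGraph V) [DecidableRel G.Adj]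
    (hδ : G.minDegree < (G.maxDegree + 2) / 2)
    (Ψ : Finset (Finset V)) (hΨ : IsTCPartition G Ψ) :
    Ψ.card ≤ G.minDegree * (G.maxDegree - G.minDegree + 2) := by
  cases isEmpty_or_nonempty V
  · have : Ψ = ∅ := eq_empty_of_forall_notMem fun C hC => isEmptyElim (hΨ.1 C hC).choose
    simp [this]
  obtain ⟨v, hv⟩ := G.exists_minimal_degree_vertex
  obtain ⟨r, hr, hcard⟩ := hΨ.exists_card_le_degree_add v
  rw [← hv] at hr hcard
  exact hcard.trans (add_mul_sub_le_mul_sub_add_two hr (by omega))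

/-- If `δ(G) < ⌊(Δ(G)+2)/2⌋`, then every total coalition partition of the isolate-free
graph `G` has at most `δ(G)(Δ(G) − δ(G) + 2)` classes. -/
theorem statement_12 [Fintype V] [DecidableEq V]
    (G : SimpleGraph V) [DecidableRel G.Adj] (hG : IsolateFree G)
    (hδ : G.minDegree < (G.maxDegree + 2) / 2)
    (Ψ : Finset (Finset V)) (hΨ : IsTCPartition G Ψ) :
    Ψ.card ≤ G.minDegree * (G.maxDegree - G.minDegree + 2) :=
  statement_12_general G hδ Ψ hΨ
end

section
/- Let G be a finite simple isolate-free graph whose maximum degree Δ = Δ(G) is odd with Δ ≥ 5, and suppose TC(G) = ⌊Δ²/4 + Δ + 1⌋ = (Δ+1)(Δ+3)/4. Then for any two total coalition partitions Ψ and Ψ' of G, each having TC(G) classes and such that the maximum matching sizes of the total coalition graphs TCG(G,Ψ) and TCG(G,Ψ') are equal, the total coalition graphs TCG(G,Ψ) and TCG(G,Ψ') are isomorphic as graphs. -/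
open scoped Classical

variable {V : Type*}

/-- The total coalition number `TC(G)`: the maximum number of classes in a total
coalition partition of `G`. -/
noncomputable def TCnum [DecidableEq V] (G : SimpleGraph V) : ℕ :=
  sSup {k | ∃ Ψ : Finset (Finset V), IsTCPartition G Ψ ∧ Ψ.card = k}

/-- The total coalition graph `TCG(G,Ψ)` has a matching of size `m`: there are `2m`
pairwise distinct classes `A i`, `B i` of `Ψ` such that `A i` and `B i` form a total
coalition for each `i`. -/
def HasMatchingOfSize [DecidableEq V] (G : SimpleGraph V) (Ψ : Finset (Finset V))
    (m : ℕ) : Prop :=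
  ∃ A B : Fin m → Finset V,
    (∀ i, A i ∈ Ψ) ∧ (∀ i, B i ∈ Ψ) ∧
    Function.Injective (Sum.elim A B) ∧
    ∀ i, TotalCoalition G (A i) (B i)

/-- The maximum size of a matching in the total coalition graph `TCG(G,Ψ)`. -/
noncomputable def matchNum [DecidableEq V] (G : SimpleGraph V)
    (Ψ : Finset (Finset V)) : ℕ :=
  sSup {m | HasMatchingOfSize G Ψ m}

/-!
Regard the classes of `Ψ` as the vertices of `TCG G Ψ`. For a vertex `v` of `G`, the classes
containing no neighbour of `v` are pairwise non-adjacent (a coalition dominates `v`), and all but at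
most `Δ` classes are of this kind; so every non-adjacent pair of classes lies in an independent set
of size at least `|Ψ| - Δ`.

Let `I` be a maximum independent set of `TCG G Ψ` and `R` its complement, `r = |R|`. Maximality of
`I` gives Hall's condition `|D| ≤ |N_I(D)|` for independent `D ⊆ R`, which makes the surplus
`|N_I(B)| - |B|` subadditive, and the large independent sets above give sets `B ⊆ R` of surplus at
most `Δ - r`. If `R` were not a clique, `r - 1` such sets would cover `R`, giving
`|I| ≤ r + (r - 1)(Δ - r)`, which is too small when `4|Ψ| = (Δ + 1)(Δ + 3)` and `Δ ≥ 5`. So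
`R` is a clique, each of its classes has at most `Δ + 1 - r` neighbours in `I`, and the parity of
`Δ` forces equality throughout: `TCG G Ψ` is the corona of `K_r` with `Δ + 1 - r` leaves at each
clique vertex. Such a graph is determined by `r`, which is its matching number.
-/

open Finset

lemma four_mul_lt_of_two_le {r c : ℕ} (h5 : 5 ≤ r + c) (hr : 2 ≤ r) :
    4 * (r + (r - 1) * c + r) < (r + c + 1) * (r + c + 3) := by
  obtain ⟨s, rfl⟩ : ∃ s, r = s + 2 := ⟨r - 2, by omega⟩
  rw [show s + 2 - 1 = s + 1 by omega]
  rcases Nat.eq_zero_or_pos c with rfl | hc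
  · nlinarith
  · nlinarith [sq_nonneg ((s : ℤ) - c)]

lemma four_mul_mul_add_two_le_of_odd {r c : ℕ} (hodd : Odd (r + c)) :
    4 * (r * (c + 2)) ≤ (r + c + 1) * (r + c + 3) := by
  obtain ⟨m, hm⟩ : Odd ((c : ℤ) - r) := by
    obtain ⟨k, hk⟩ := hodd
    exact ⟨k - r, by omega⟩
  -- the difference of the two sides is `(c - r + 1) * (c - r + 3) = 4 * (m + 1) * (m + 2)`
  have key : 0 ≤ (m + 1) * (m + 2) := by
    rcases le_or_gt (-1) m with hm1 | hm1 <;> nlinarith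
  zify
  nlinarith

lemma card_filter_eq_one_of_sum_card_filter_eq {β γ : Type*} {s : Finset β} {t : Finset γ}
    {r : β → γ → Prop} (hpos : ∀ b ∈ t, ∃ a ∈ s, r a b)
    (hsum : ∑ a ∈ s, #(t.filter (r a)) = #t) {b : γ} (hb : b ∈ t) :
    #(s.filter (r · b)) = 1 := by
  have hdouble := sum_card_bipartiteAbove_eq_sum_card_bipartiteBelow (s := s) (t := t) (r := r)
  simp only [bipartiteAbove, bipartiteBelow] at hdouble
  have hpos' (b : γ) (hb : b ∈ t) : 1 ≤ #(s.filter (r · b)) := by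
    obtain ⟨a, ha, hab⟩ := hpos b hb
    exact card_pos.2 ⟨a, mem_filter.2 ⟨ha, hab⟩⟩
  exact ((sum_eq_sum_iff_of_le hpos').1 (by rw [← hdouble, hsum, card_eq_sum_ones]) b hb).symm

namespace SimpleGraph

variable {α : Type*} {H : SimpleGraph α}

variable (H) in
noncomputable def neighborsIn (B I : Finset α) : Finset α :=
  I.filter fun x => ∃ b ∈ B, H.Adj b x

lemma mem_neighborsIn {B I : Finset α} {x : α} :
    x ∈ H.neighborsIn B I ↔ x ∈ I ∧ ∃ b ∈ B, H.Adj b x :=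
  mem_filter

lemma neighborsIn_subset (B I : Finset α) : H.neighborsIn B I ⊆ I := filter_subset _ _

lemma neighborsIn_mono {B B' : Finset α} (I : Finset α) (h : B ⊆ B') :
    H.neighborsIn B I ⊆ H.neighborsIn B' I :=
  fun x hx => by
    obtain ⟨hxI, b, hb, hadj⟩ := mem_neighborsIn.1 hx
    exact mem_neighborsIn.2 ⟨hxI, b, h hb, hadj⟩

lemma neighborsIn_union (B B' I : Finset α) :
    H.neighborsIn (B ∪ B') I = H.neighborsIn B I ∪ H.neighborsIn B' I := by
  simp only [neighborsIn, ← filter_or, mem_union, or_and_right, exists_or]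

lemma neighborsIn_empty (I : Finset α) : H.neighborsIn ∅ I = ∅ := by
  simp [neighborsIn]

/-- `H` is the corona of the clique `R` with `p` pendant vertices at each vertex of `R`. -/
structure IsCorona [Fintype α] (H : SimpleGraph α) (R : Finset α) (p : ℕ) : Prop where
  isClique : H.IsClique (R : Set α)
  isIndepSet : H.IsIndepSet (↑Rᶜ : Set α)
  existsUnique_adj : ∀ x ∉ R, ∃! u, u ∈ R ∧ H.Adj u x
  card_filter_adj : ∀ u ∈ R, #(Rᶜ.filter (H.Adj u)) = p

namespace IsCorona

variable [Fintype α] {R : Finset α} {p : ℕ}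

noncomputable def hub (h : IsCorona H R p) (x : α) : R :=
  if hx : x ∈ R then ⟨x, hx⟩ else
    ⟨(h.existsUnique_adj x hx).exists.choose, (h.existsUnique_adj x hx).exists.choose_spec.1⟩

lemma hub_of_mem (h : IsCorona H R p) {x : α} (hx : x ∈ R) : h.hub x = ⟨x, hx⟩ := dif_pos hx

lemma adj_iff_hub_eq (h : IsCorona H R p) {x u : α} (hx : x ∉ R) (hu : u ∈ R) :
    H.Adj u x ↔ (h.hub x : α) = u := by
  have hspec := (h.existsUnique_adj x hx).exists.choose_spec
  rw [hub, dif_neg hx]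
  exact ⟨fun hadj => (h.existsUnique_adj x hx).unique hspec ⟨hu, hadj⟩,
    fun heq => heq ▸ hspec.2⟩

lemma adj_iff (h : IsCorona H R p) {x y : α} :
    H.Adj x y ↔ (x ∈ R ∨ y ∈ R) ∧ (x ∈ R ∧ y ∈ R ↔ h.hub x ≠ h.hub y) := by
  by_cases hx : x ∈ R <;> by_cases hy : y ∈ R
  · simp only [hx, hy, h.hub_of_mem, ne_eq, Subtype.mk.injEq, true_or, true_and, true_iff]
    exact ⟨H.ne_of_adj, fun hne => h.isClique hx hy hne⟩
  · rw [h.adj_iff_hub_eq hy hx, h.hub_of_mem hx]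
    simp [Subtype.ext_iff, hx, hy, eq_comm]
  · rw [H.adj_comm, h.adj_iff_hub_eq hx hy, h.hub_of_mem hy]
    simp [Subtype.ext_iff, hx, hy]
  · simp only [hx, hy, or_self, false_and, iff_false]
    exact fun hadj => h.isIndepSet (by simpa) (by simpa) (H.ne_of_adj hadj) hadj

lemma card_fiber (h : IsCorona H R p) {γ : Type*} (φ : R ≃ γ) (c : γ × Bool) :
    Fintype.card {x // (φ (h.hub x), decide (x ∈ R)) = c} = bif c.2 then 1 else p := by
  obtain ⟨c, _ | _⟩ := c
  · refine (Fintype.card_subtype _).trans (Eq.trans ?_ (h.card_filter_adj _ (φ.symm c).2))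
    congr 1
    ext x
    simp only [mem_filter, mem_univ, true_and, Prod.mk.injEq, decide_eq_false_iff_not,
      mem_compl]
    constructor
    · rintro ⟨hc, hx⟩
      exact ⟨hx, (h.adj_iff_hub_eq hx (φ.symm c).2).2 (by rw [← hc, Equiv.symm_apply_apply])⟩
    · rintro ⟨hx, hadj⟩
      refine ⟨?_, hx⟩
      rw [← Equiv.eq_symm_apply]
      exact Subtype.ext ((h.adj_iff_hub_eq hx (φ.symm c).2).1 hadj)
  · refine Fintype.card_eq_one_iff.2 ⟨⟨φ.symm c, by simp [h.hub_of_mem]⟩, ?_⟩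
    rintro ⟨x, hx⟩
    simp only [Prod.mk.injEq, decide_eq_true_eq] at hx
    rw [h.hub_of_mem hx.2, ← Equiv.eq_symm_apply] at hx
    have hxc : x = φ.symm c := congrArg Subtype.val hx.1
    exact Subtype.ext hxc

theorem nonempty_iso {β : Type*} [Fintype β] {H' : SimpleGraph β} {R' : Finset β}
    (h : IsCorona H R p) (h' : IsCorona H' R' p) (hR : #R = #R') : Nonempty (H ≃g H') := by
  let φ : R ≃ R' := Finset.equivOfCardEq hR
  let f (x : α) : R' × Bool := (φ (h.hub x), decide (x ∈ R))
  let g (y : β) : R' × Bool := (Equiv.refl R' (h'.hub y), decide (y ∈ R'))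
  have hfib (c : R' × Bool) : Fintype.card {x // f x = c} = Fintype.card {y // g y = c} := by
    convert (h.card_fiber φ c).trans (h'.card_fiber (Equiv.refl _) c).symm
  let e : α ≃ β := Equiv.ofFiberEquiv fun c => Fintype.equivOfCardEq (hfib c)
  have he (x : α) : g (e x) = f x := Equiv.ofFiberEquiv_map _ x
  have hmem (x : α) : e x ∈ R' ↔ x ∈ R := decide_eq_decide.1 (congrArg Prod.snd (he x))
  have hhub (x : α) : h'.hub (e x) = φ (h.hub x) := congrArg Prod.fst (he x)
  refine ⟨⟨e, fun {x y} => ?_⟩⟩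
  rw [h'.adj_iff, h.adj_iff, hmem, hmem, hhub, hhub, φ.injective.ne_iff]

theorem isGreatest_card (h : IsCorona H R p) (hp : 0 < p) :
    IsGreatest {m | ∃ f : Fin m ⊕ Fin m → α,
      Function.Injective f ∧ ∀ i, H.Adj (f (.inl i)) (f (.inr i))} #R := by
  constructor
  · have hleaf (u : R) : ∃ x, x ∉ R ∧ H.Adj u x := by
      obtain ⟨x, hx⟩ := card_pos.1 (hp.trans_eq (h.card_filter_adj u u.2).symm)
      rw [mem_filter, mem_compl] at hx
      exact ⟨x, hx⟩
    choose leaf hleaf_notMem hleaf_adj using hleaf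
    have hleaf_inj : Function.Injective leaf := fun u v huv => Subtype.ext <| by
      rw [← (h.adj_iff_hub_eq (hleaf_notMem u) u.2).1 (hleaf_adj u),
        ← (h.adj_iff_hub_eq (hleaf_notMem v) v.2).1 (hleaf_adj v), huv]
    let e := R.equivFin.symm
    refine ⟨Sum.elim (fun i => (e i : α)) (fun i => leaf (e i)), ?_, fun i => hleaf_adj _⟩
    exact (Subtype.val_injective.comp e.injective).sumElim (hleaf_inj.comp e.injective)
      fun i j hij => hleaf_notMem (e j) (by rw [← hij]; exact (e i).2)
  · rintro m ⟨f, hf, hadj⟩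
    have hcover (i : Fin m) : f (.inl i) ∈ R ∨ f (.inr i) ∈ R := by
      by_contra! hi
      exact h.isIndepSet (by simpa using hi.1) (by simpa using hi.2) (hadj i).ne (hadj i)
    let σ : Fin m → Fin m ⊕ Fin m := fun i => if f (.inl i) ∈ R then .inl i else .inr i
    have hσ : Function.LeftInverse (Sum.elim id id) σ := fun i => by
      dsimp only [σ]; split_ifs <;> rfl
    have hσR (i : Fin m) : f (σ i) ∈ R := by
      dsimp only [σ]; split_ifs with hi
      exacts [hi, (hcover i).resolve_left hi]
    simpa using Fintype.card_le_of_injective (fun i => (⟨f (σ i), hσR i⟩ : R))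
      fun i j hij => hσ.injective (hf (congrArg Subtype.val hij))

end IsCorona

section MaximumIndepSet

variable [Fintype α]

variable (H) in
/-- Taking `x = y`, every vertex lies in an independent set of size at least `|α| - Δ`. -/
def NonAdjPairsInLargeIndepSets (Δ : ℕ) : Prop :=
  ∀ x y, ¬ H.Adj x y → ∃ t : Finset α, x ∈ t ∧ y ∈ t ∧ H.IsIndepSet (t : Set α) ∧
    Fintype.card α ≤ #t + Δ

variable {I : Finset α} {Δ : ℕ}

lemma card_le_card_neighborsIn (hI : H.IsMaximumIndepSet I) {D : Finset α} (hD : D ⊆ Iᶜ)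
    (hDind : H.IsIndepSet (D : Set α)) : #D ≤ #(H.neighborsIn D I) := by
  have hdisj : Disjoint D (I \ H.neighborsIn D I) :=
    disjoint_of_subset_left hD (disjoint_compl_left.mono_right sdiff_subset)
  have hind : H.IsIndepSet (↑(D ∪ (I \ H.neighborsIn D I)) : Set α) := by
    intro a ha b hb hab hadj
    simp only [coe_union, coe_sdiff, Set.mem_union, Set.mem_sdiff, mem_coe,
      mem_neighborsIn, not_and, not_exists] at ha hb
    rcases ha with ha | ⟨haI, haN⟩ <;> rcases hb with hb | ⟨hbI, hbN⟩
    · exact hDind ha hb hab hadj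
    · exact hbN hbI a ha hadj
    · exact haN haI b hb hadj.symm
    · exact hI.isIndepSet haI hbI hab hadj
  have hmax := hI.maximum _ hind
  rw [card_union_of_disjoint hdisj, card_sdiff_of_subset (neighborsIn_subset D I)] at hmax
  have := card_le_card (neighborsIn_subset (H := H) D I)
  omega

lemma card_neighborsIn_union_add_le (hI : H.IsMaximumIndepSet I) {D : Finset α} (hD : D ⊆ Iᶜ)
    (hDind : H.IsIndepSet (D : Set α)) (U : Finset α) :
    #(H.neighborsIn (D ∪ U) I) + #D + #U ≤
      #(H.neighborsIn D I) + #(H.neighborsIn U I) + #(D ∪ U) := by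
  have hinter : #(D ∩ U) ≤ #(H.neighborsIn D I ∩ H.neighborsIn U I) :=
    (card_le_card_neighborsIn hI (inter_subset_left.trans hD)
      (hDind.mono inter_subset_left)).trans
      (card_le_card (subset_inter (neighborsIn_mono I inter_subset_left)
        (neighborsIn_mono I inter_subset_right)))
  have := card_union_add_card_inter (H.neighborsIn D I) (H.neighborsIn U I)
  have := card_union_add_card_inter D U
  rw [neighborsIn_union]
  omega

lemma card_neighborsIn_biUnion_le (hI : H.IsMaximumIndepSet I) {ι : Type*} (J : Finset ι)
    {B : ι → Finset α} {c : ℕ}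
    (hB : ∀ j ∈ J, B j ⊆ Iᶜ ∧ H.IsIndepSet (B j : Set α) ∧
      #(H.neighborsIn (B j) I) ≤ #(B j) + c) :
    #(H.neighborsIn (J.biUnion B) I) ≤ #(J.biUnion B) + #J * c := by
  induction J using Finset.induction_on with
  | empty => simp [neighborsIn_empty]
  | insert j J hj ih =>
    obtain ⟨hBj, hBind, hBc⟩ := hB j (mem_insert_self j J)
    have := ih fun j' hj' => hB j' (mem_insert_of_mem hj')
    have := card_neighborsIn_union_add_le hI hBj hBind (J.biUnion B)
    rw [biUnion_insert, card_insert_of_notMem hj, add_one_mul]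
    omega

lemma exists_isIndepSet_subset_compl_card_neighborsIn_le (hpair : H.NonAdjPairsInLargeIndepSets Δ)
    {x y : α} (hx : x ∉ I) (hy : y ∉ I) (hxy : ¬ H.Adj x y) :
    ∃ B ⊆ Iᶜ, H.IsIndepSet (B : Set α) ∧ x ∈ B ∧ y ∈ B ∧
      #(H.neighborsIn B I) + #Iᶜ ≤ #B + Δ := by
  obtain ⟨t, hxt, hyt, ht, hcard⟩ := hpair x y hxy
  refine ⟨t \ I, fun z hz => mem_compl.2 (mem_sdiff.1 hz).2, ht.mono sdiff_subset,
    mem_sdiff.2 ⟨hxt, hx⟩, mem_sdiff.2 ⟨hyt, hy⟩, ?_⟩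
  have hdisj : Disjoint (t ∩ I) (H.neighborsIn (t \ I) I) := by
    refine Finset.disjoint_left.2 fun z hz hzN => ?_
    obtain ⟨-, b, hb, hadj⟩ := mem_neighborsIn.1 hzN
    have hbz : b ≠ z := fun hbz => (mem_sdiff.1 hb).2 (hbz ▸ (mem_inter.1 hz).2)
    exact ht (mem_sdiff.1 hb).1 (mem_inter.1 hz).1 hbz hadj
  have hsub := card_le_card (union_subset (inter_subset_right (s₁ := t))
    (neighborsIn_subset (H := H) (t \ I) I))
  rw [card_union_of_disjoint hdisj] at hsub
  have := card_sdiff_add_card_inter t I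
  have := card_add_card_compl I
  omega

lemma exists_isIndepSet_mem_card_neighborsIn_le (hpair : H.NonAdjPairsInLargeIndepSets Δ)
    {x : α} (hx : x ∉ I) :
    ∃ B ⊆ Iᶜ, H.IsIndepSet (B : Set α) ∧ x ∈ B ∧
      #(H.neighborsIn B I) + #Iᶜ ≤ #B + Δ := by
  obtain ⟨B, hB, hBind, hxB, -, hBcard⟩ :=
    exists_isIndepSet_subset_compl_card_neighborsIn_le hpair hx hx H.irrefl
  exact ⟨B, hB, hBind, hxB, hBcard⟩

lemma exists_mem_compl_adj (hiso : ∀ x, ∃ y, H.Adj x y) (hI : H.IsIndepSet (I : Set α))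
    {x : α} (hx : x ∈ I) : ∃ u ∈ Iᶜ, H.Adj u x := by
  obtain ⟨y, hxy⟩ := hiso x
  exact ⟨y, mem_compl.2 fun hy => hI hx hy (H.ne_of_adj hxy) hxy, hxy.symm⟩

lemma isClique_compl_of_isMaximumIndepSet (hpair : H.NonAdjPairsInLargeIndepSets Δ)
    (hiso : ∀ x, ∃ y, H.Adj x y) (hI : H.IsMaximumIndepSet I) (h5 : 5 ≤ Δ)
    (hcard : 4 * Fintype.card α = (Δ + 1) * (Δ + 3)) (hr : #Iᶜ ≤ Δ) :
    H.IsClique (↑Iᶜ : Set α) := by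
  intro u hu w hw huw
  by_contra hadj
  rw [mem_coe, mem_compl] at hu hw
  obtain ⟨B₀, hB₀, hB₀ind, huB₀, hwB₀, hB₀card⟩ :=
    exists_isIndepSet_subset_compl_card_neighborsIn_le hpair hu hw hadj
  choose! B hB hBind hzB hBcard using fun z (hz : z ∈ Iᶜ) =>
    exists_isIndepSet_mem_card_neighborsIn_le hpair (mem_compl.1 hz)
  set U := (Iᶜ \ B₀).biUnion B
  have hU : #(H.neighborsIn U I) ≤ #U + #(Iᶜ \ B₀) * (Δ - #Iᶜ) :=
    card_neighborsIn_biUnion_le hI (Iᶜ \ B₀) fun j hj =>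
      have hj := (mem_sdiff.1 hj).1
      ⟨hB j hj, hBind j hj, by have := hBcard j hj; omega⟩
  have hB₀U : B₀ ∪ U = Iᶜ := by
    refine subset_antisymm (union_subset hB₀ (biUnion_subset.2 fun j hj =>
      hB j (mem_sdiff.1 hj).1)) fun z hz => ?_
    by_cases hzB₀ : z ∈ B₀
    · exact mem_union_left _ hzB₀
    · exact mem_union_right _ (mem_biUnion.2 ⟨z, mem_sdiff.2 ⟨hz, hzB₀⟩, hzB z hz⟩)
  have hstep := card_neighborsIn_union_add_le hI hB₀ hB₀ind U
  rw [hB₀U] at hstep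
  have hIN : #I ≤ #(H.neighborsIn Iᶜ I) := card_le_card fun x hx =>
    have ⟨y, hy, hyx⟩ := exists_mem_compl_adj hiso hI.isIndepSet hx
    mem_neighborsIn.2 ⟨hx, y, hy, hyx⟩
  have hB₀two : 2 ≤ #B₀ := one_lt_card.2 ⟨u, huB₀, w, hwB₀, huw⟩
  have hsplit := card_sdiff_add_card_eq_card hB₀
  have hmul : (1 + #(Iᶜ \ B₀)) * (Δ - #Iᶜ) ≤ (#Iᶜ - 1) * (Δ - #Iᶜ) :=
    Nat.mul_le_mul_right _ (by omega)
  have hlt := four_mul_lt_of_two_le (r := #Iᶜ) (c := Δ - #Iᶜ) (by omega) (by omega)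
  rw [show #Iᶜ + (Δ - #Iᶜ) = Δ by omega, ← hcard, ← card_add_card_compl I] at hlt
  have hc : Δ - #Iᶜ + #Iᶜ = Δ := by omega
  linarith

lemma card_filter_adj_add_card_compl_le (hpair : H.NonAdjPairsInLargeIndepSets Δ)
    (hclique : H.IsClique (↑Iᶜ : Set α)) {u : α} (hu : u ∈ Iᶜ) :
    #(I.filter (H.Adj u)) + #Iᶜ ≤ Δ + 1 := by
  obtain ⟨B, hB, hBind, huB, hBcard⟩ :=
    exists_isIndepSet_mem_card_neighborsIn_le hpair (mem_compl.1 hu)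
  have hBu : B = {u} := eq_singleton_iff_unique_mem.2 ⟨huB, fun b hb =>
    by_contra fun hbu => hBind hb huB hbu (hclique (hB hb) hu hbu)⟩
  have hN : H.neighborsIn {u} I = I.filter (H.Adj u) := by
    ext x
    simp [mem_neighborsIn]
  rwa [hBu, hN, card_singleton, add_comm 1] at hBcard

lemma isCorona_compl_of_isMaximumIndepSet (hpair : H.NonAdjPairsInLargeIndepSets Δ)
    (hiso : ∀ x, ∃ y, H.Adj x y) (hI : H.IsMaximumIndepSet I) (hodd : Odd Δ)
    (hcard : 4 * Fintype.card α = (Δ + 1) * (Δ + 3)) (hr : #Iᶜ ≤ Δ)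
    (hclique : H.IsClique (↑Iᶜ : Set α)) :
    H.IsCorona Iᶜ (Δ + 1 - #Iᶜ) := by
  set p := Δ + 1 - #Iᶜ
  have hdeg (u : α) (hu : u ∈ Iᶜ) : #(I.filter (H.Adj u)) ≤ p := by
    have := card_filter_adj_add_card_compl_le hpair hclique hu
    omega
  have hIle : #I ≤ ∑ u ∈ Iᶜ, #(I.filter (H.Adj u)) := by
    refine (card_le_card fun x hx => ?_).trans card_biUnion_le
    obtain ⟨u, hu, hux⟩ := exists_mem_compl_adj hiso hI.isIndepSet hx
    exact mem_biUnion.2 ⟨u, hu, mem_filter.2 ⟨hx, hux⟩⟩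
  have hsum_le : ∑ u ∈ Iᶜ, #(I.filter (H.Adj u)) ≤ #Iᶜ * p := by
    simpa using sum_le_card_nsmul _ _ _ hdeg
  have hI_eq : #I = #Iᶜ * p := by
    have := four_mul_mul_add_two_le_of_odd (r := #Iᶜ) (c := Δ - #Iᶜ)
      (by rwa [show #Iᶜ + (Δ - #Iᶜ) = Δ by omega])
    rw [show #Iᶜ + (Δ - #Iᶜ) = Δ by omega, ← hcard, ← card_add_card_compl I] at this
    rw [show p = Δ - #Iᶜ + 1 by omega] at hsum_le ⊢
    nlinarith
  have hdeg_eq : ∀ u ∈ Iᶜ, #(I.filter (H.Adj u)) = p :=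
    (sum_eq_sum_iff_of_le hdeg).1 (by rw [sum_const, smul_eq_mul]; omega)
  refine ⟨hclique, by rw [compl_compl]; exact hI.isIndepSet, fun x hx => ?_, fun u hu => ?_⟩
  · rw [mem_compl, not_not] at hx
    obtain ⟨u, hu⟩ := card_eq_one.1 <| card_filter_eq_one_of_sum_card_filter_eq
      (fun x hx => exists_mem_compl_adj hiso hI.isIndepSet hx)
      (by rw [sum_congr rfl hdeg_eq, sum_const, smul_eq_mul, hI_eq]) hx
    have hmem (v : α) : v ∈ Iᶜ ∧ H.Adj v x ↔ v = u := by
      simpa using Finset.ext_iff.1 hu v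
    exact ⟨u, (hmem u).2 rfl, fun v hv => (hmem v).1 hv⟩
  · rw [compl_compl]
    exact hdeg_eq u hu

theorem exists_isCorona (hiso : ∀ x, ∃ y, H.Adj x y) (hpair : H.NonAdjPairsInLargeIndepSets Δ)
    (hodd : Odd Δ) (h5 : 5 ≤ Δ) (hcard : 4 * Fintype.card α = (Δ + 1) * (Δ + 3)) :
    ∃ R p, H.IsCorona R p ∧ 0 < p ∧ #R + p = Δ + 1 := by
  obtain ⟨I, hI⟩ := H.maximumIndepSet_exists
  have hr : #Iᶜ ≤ Δ := by
    obtain ⟨x⟩ : Nonempty α := Fintype.card_pos_iff.1 (by nlinarith)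
    obtain ⟨t, -, -, ht, htcard⟩ := hpair x x H.irrefl
    have := hI.maximum t ht
    have := card_add_card_compl I
    omega
  exact ⟨Iᶜ, Δ + 1 - #Iᶜ, isCorona_compl_of_isMaximumIndepSet hpair hiso hI hodd hcard hr
    (isClique_compl_of_isMaximumIndepSet hpair hiso hI h5 hcard hr), by omega, by omega⟩

end MaximumIndepSet

end SimpleGraph

namespace IsTCPartition

variable [DecidableEq V] {G : SimpleGraph V} {Ψ : Finset (Finset V)}

lemma disjoint (hΨ : IsTCPartition G Ψ) {C D : Finset V} (hC : C ∈ Ψ) (hD : D ∈ Ψ)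
    (hne : C ≠ D) : Disjoint C D :=
  Finset.disjoint_left.2 fun x hxC hxD => hne ((hΨ.2.1 x).unique ⟨hC, hxC⟩ ⟨hD, hxD⟩)

lemma exists_adj (hΨ : IsTCPartition G Ψ) (C : Ψ) : ∃ D, (TCG G Ψ).Adj C D := by
  obtain ⟨D, hD, hne, hco⟩ := hΨ.2.2.2 C C.2
  exact ⟨⟨D, hD⟩, fun h => hne (congrArg Subtype.val h).symm, hco⟩

lemma not_totalDomSet_union (hΨ : IsTCPartition G Ψ) {C D : Ψ} (h : ¬ (TCG G Ψ).Adj C D) :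
    ¬ TotalDomSet G (C.1 ∪ D.1) := by
  intro hdom
  by_cases hCD : C = D
  · rw [hCD, Finset.union_self] at hdom
    exact hΨ.2.2.1 D D.2 hdom
  · exact h ⟨hCD, hΨ.disjoint C.2 D.2 (Subtype.coe_ne_coe.2 hCD), hΨ.2.2.1 C C.2,
      hΨ.2.2.1 D D.2, hdom⟩

lemma isIndepSet_of_forall_not_adj (v : V) {t : Finset Ψ}
    (ht : ∀ C ∈ t, ∀ u ∈ C.1, ¬ G.Adj v u) : (TCG G Ψ).IsIndepSet (t : Set Ψ) := by
  intro C hC D hD _ hadj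
  obtain ⟨u, hu, hvu⟩ := hadj.2.2.2.2 v
  rcases Finset.mem_union.1 hu with hu | hu
  exacts [ht C hC u hu hvu, ht D hD u hu hvu]

variable [Fintype V] [DecidableRel G.Adj]

lemma card_le_card_filter_forall_not_adj_add_maxDegree (hΨ : IsTCPartition G Ψ) (v : V) :
    #Ψ ≤ #(Ψ.attach.filter fun C => ∀ u ∈ C.1, ¬ G.Adj v u) + G.maxDegree := by
  choose cls hcls using fun u : V => (hΨ.2.1 u).exists
  have hsub : Ψ.attach.filter (fun C => ¬ ∀ u ∈ C.1, ¬ G.Adj v u) ⊆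
      (G.neighborFinset v).image fun u => ⟨cls u, (hcls u).1⟩ := fun C hC => by
    simp only [Finset.mem_filter, Finset.mem_attach, true_and, not_forall, not_not] at hC
    obtain ⟨u, hu, hvu⟩ := hC
    exact Finset.mem_image.2 ⟨u, (G.mem_neighborFinset v u).2 hvu,
      Subtype.ext ((hΨ.2.1 u).unique (hcls u) ⟨C.2, hu⟩)⟩
  have hsplit := Finset.card_filter_add_card_filter_not (s := Ψ.attach)
    fun C => ∀ u ∈ C.1, ¬ G.Adj v u
  rw [Finset.card_attach] at hsplit
  have := (Finset.card_le_card hsub).trans Finset.card_image_le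
  rw [SimpleGraph.card_neighborFinset_eq_degree] at this
  have := G.degree_le_maxDegree v
  omega

lemma nonAdjPairsInLargeIndepSets (hΨ : IsTCPartition G Ψ) :
    (TCG G Ψ).NonAdjPairsInLargeIndepSets G.maxDegree := by
  intro C D h
  obtain ⟨v, hv⟩ : ∃ v, ∀ u ∈ C.1 ∪ D.1, ¬ G.Adj v u := by
    simpa [TotalDomSet] using hΨ.not_totalDomSet_union h
  refine ⟨_, ?_, ?_, isIndepSet_of_forall_not_adj v fun C hC => (Finset.mem_filter.1 hC).2, by
    rw [Fintype.card_coe]; exact hΨ.card_le_card_filter_forall_not_adj_add_maxDegree v⟩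
  · simpa using fun u hu => hv u (Finset.mem_union_left _ hu)
  · simpa using fun u hu => hv u (Finset.mem_union_right _ hu)

theorem exists_isCorona (hΨ : IsTCPartition G Ψ) (hodd : Odd G.maxDegree)
    (h5 : 5 ≤ G.maxDegree) (hcard : 4 * #Ψ = (G.maxDegree + 1) * (G.maxDegree + 3)) :
    ∃ R p, (TCG G Ψ).IsCorona R p ∧ 0 < p ∧ #R + p = G.maxDegree + 1 :=
  SimpleGraph.exists_isCorona hΨ.exists_adj hΨ.nonAdjPairsInLargeIndepSets hodd h5
    (by rwa [Fintype.card_coe])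

end IsTCPartition

section Matching

variable [DecidableEq V] {G : SimpleGraph V} {Ψ : Finset (Finset V)}

lemma hasMatchingOfSize_iff {m : ℕ} : HasMatchingOfSize G Ψ m ↔
    ∃ f : Fin m ⊕ Fin m → Ψ,
      Function.Injective f ∧ ∀ i, (TCG G Ψ).Adj (f (.inl i)) (f (.inr i)) := by
  constructor
  · rintro ⟨A, B, hA, hB, hinj, hco⟩
    let f : Fin m ⊕ Fin m → Ψ := Sum.elim (fun i => ⟨A i, hA i⟩) (fun i => ⟨B i, hB i⟩)
    have hf : Subtype.val ∘ f = Sum.elim A B := by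
      funext x; cases x <;> rfl
    refine ⟨f, .of_comp (f := Subtype.val) (hf ▸ hinj), fun i => ⟨fun h => ?_, hco i⟩⟩
    exact Sum.inl_ne_inr (hinj (congrArg Subtype.val h))
  · rintro ⟨f, hf, hadj⟩
    refine ⟨fun i => f (.inl i), fun i => f (.inr i), fun i => (f _).2, fun i => (f _).2, ?_,
      fun i => (hadj i).2⟩
    have : Sum.elim (fun i => (f (.inl i)).1) (fun i => (f (.inr i)).1) = Subtype.val ∘ f := by
      funext x; cases x <;> rfl
    exact this ▸ Subtype.val_injective.comp hf

lemma matchNum_eq_card {R : Finset Ψ} {p : ℕ} (h : (TCG G Ψ).IsCorona R p)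
    (hp : 0 < p) : matchNum G Ψ = #R := by
  unfold matchNum
  simp_rw [hasMatchingOfSize_iff]
  exact (h.isGreatest_card hp).csSup_eq

end Matching

theorem statement_15_general [Fintype V] [DecidableEq V]
    (G : SimpleGraph V) [DecidableRel G.Adj]
    (hodd : Odd G.maxDegree) (h5 : 5 ≤ G.maxDegree)
    (hTC : TCnum G = (G.maxDegree + 1) * (G.maxDegree + 3) / 4)
    (Ψ Ψ' : Finset (Finset V)) (hΨ : IsTCPartition G Ψ) (hΨ' : IsTCPartition G Ψ')
    (hc : Ψ.card = TCnum G) (hc' : Ψ'.card = TCnum G)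
    (hmatch : matchNum G Ψ = matchNum G Ψ') :
    Nonempty (TCG G Ψ ≃g TCG G Ψ') := by
  have h4 : 4 * TCnum G = (G.maxDegree + 1) * (G.maxDegree + 3) := by
    obtain ⟨k, hk⟩ := hodd
    rw [hTC, Nat.mul_div_cancel' ⟨(k + 1) * (k + 2), by rw [hk]; ring⟩]
  obtain ⟨R, p, hR, hp, hRp⟩ := hΨ.exists_isCorona hodd h5 (hc ▸ h4)
  obtain ⟨R', p', hR', hp', hRp'⟩ := hΨ'.exists_isCorona hodd h5 (hc' ▸ h4)
  have hRR' : #R = #R' := by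
    rw [← matchNum_eq_card hR hp, ← matchNum_eq_card hR' hp', hmatch]
  obtain rfl : p = p' := by omega
  exact hR.nonempty_iso hR' hRR'

/-- If `Δ(G)` is odd, `Δ(G) ≥ 5`, and `TC(G) = (Δ(G)+1)(Δ(G)+3)/4`, then any two
optimal total coalition partitions of `G` whose total coalition graphs have the same
maximum matching size have isomorphic total coalition graphs. -/
theorem statement_15 [Fintype V] [DecidableEq V]
    (G : SimpleGraph V) [DecidableRel G.Adj] (hG : IsolateFree G)
    (hodd : Odd G.maxDegree) (h5 : 5 ≤ G.maxDegree)
    (hTC : TCnum G = (G.maxDegree + 1) * (G.maxDegree + 3) / 4)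
    (Ψ Ψ' : Finset (Finset V)) (hΨ : IsTCPartition G Ψ) (hΨ' : IsTCPartition G Ψ')
    (hc : Ψ.card = TCnum G) (hc' : Ψ'.card = TCnum G)
    (hmatch : matchNum G Ψ = matchNum G Ψ') :
    Nonempty (TCG G Ψ ≃g TCG G Ψ') :=
  statement_15_general G hodd h5 hTC Ψ Ψ' hΨ hΨ' hc hc' hmatch
end
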